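/- arXiv:2405.03875 — 3 statements merged into one kernel-verified Lean document; each statement's English description precedes it below -/
import Mathlib

section
/- Let N be a finite set with |N| = n ≥ 1 and let T ⊆ N with |T| ≥ 2. Then the commander's game ū_T has Shapley value zero: φ_i(ū_T) = 0 for every i ∈ N. -/
open Finset

/-- The Shapley value of point `i` under utility function `v` on the player set `ι`. -/
noncomputable def shapley {ι : Type*} [Fintype ι] [DecidableEq ι]
    (v : Finset ι → ℝ) (i : ι) : ℝ :=
  (Fintype.card ι : ℝ)⁻¹ *
    ∑ k ∈ Finset.Icc 1 (Fintype.card ι),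
      ((Fintype.card ι - 1).choose (k - 1) : ℝ)⁻¹ *
        ∑ S ∈ (Finset.univ.erase i).powerset.filter (fun S => S.card = k - 1),
          (v (insert i S) - v S)

/-- The commander's game `ū_T`: `ū_T(S) = 1` if `|S ∩ T| = 1` and `0` otherwise. -/
def commander {ι : Type*} [DecidableEq ι] (T S : Finset ι) : ℝ :=
  if (S ∩ T).card = 1 then 1 else 0

/-!
Let `h_R(S) = 1` when `S` meets `R` and `0` otherwise. Then `h_T(S) - h_{T \ {j}}(S) = 1`
exactly when `S ∩ T = {j}`, so `ū_T = ∑_{j ∈ T} (h_T - h_{T \ {j}})`. For `i ∈ R` the marginal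
contribution of `i` to `S` in `h_R` is `1` exactly when `S` misses `R`; counting such `S` and
using `∑_m C(n - r, m) / C(n - 1, m) = n / r` gives `φ_i(h_R) = 1 / |R|`, while `φ_i(h_R) = 0` for
`i ∉ R`. By linearity, for `i ∈ T` we get `φ_i(ū_T) = |T| / |T| - (|T| - 1) / (|T| - 1) = 0`.
-/

namespace Nat

theorem choose_mul_choose_sub_eq (a b m : ℕ) :
    (a + b).choose m * (a + b - m).choose b = (a + b).choose b * a.choose m := by
  have h₁ := choose_mul (n := a + b) (k := m + b) (s := m) (by omega)
  have h₂ := choose_mul (n := a + b) (k := m + b) (s := b) (by omega)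
  rw [Nat.add_sub_cancel_left, choose_symm_add] at h₁
  rw [Nat.add_sub_cancel, Nat.add_sub_cancel] at h₂
  rw [← h₁, h₂]

theorem sum_range_choose_div_choose (a b : ℕ) :
    ∑ m ∈ range (a + b + 1), (a.choose m : ℝ) / (a + b).choose m = (a + b + 1) / (b + 1) := by
  have hab : ((a + b).choose b : ℝ) ≠ 0 := by
    exact_mod_cast (choose_pos (by omega)).ne'
  calc ∑ m ∈ range (a + b + 1), (a.choose m : ℝ) / (a + b).choose m
      = ∑ m ∈ range (a + 1), (a.choose m : ℝ) / (a + b).choose m := by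
        refine (sum_subset (range_subset_range.2 (by omega)) fun m _ hm => ?_).symm
        rw [choose_eq_zero_of_lt (by simpa using hm), cast_zero, zero_div]
    _ = ∑ m ∈ range (a + 1), ((a - m + b).choose b : ℝ) / (a + b).choose b := by
        refine sum_congr rfl fun m hm => ?_
        have hm : m ≤ a := by simpa [Nat.lt_succ_iff] using hm
        have hpos : ((a + b).choose m : ℝ) ≠ 0 := by
          exact_mod_cast (choose_pos (by omega)).ne'
        rw [div_eq_div_iff hpos hab, show a - m + b = a + b - m by omega]
        norm_cast
        rw [mul_comm, ← choose_mul_choose_sub_eq, mul_comm]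
    _ = ((a + b + 1).choose (b + 1) : ℝ) / (a + b).choose b := by
        have hockey : ∑ m ∈ range (a + 1), (a - m + b).choose b = (a + b + 1).choose (b + 1) :=
          (sum_range_reflect (fun i => (i + b).choose b) (a + 1)).trans (sum_range_add_choose a b)
        rw [← sum_div, ← hockey, cast_sum]
    _ = (a + b + 1) / (b + 1) := by
        rw [div_eq_div_iff hab (by positivity)]
        exact_mod_cast (add_one_mul_choose_eq (a + b) b).symm

end Nat

section Shapley

variable {ι : Type*} [Fintype ι] [DecidableEq ι]

theorem shapley_eq_sum_range (v : Finset ι → ℝ) (i : ι) :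
    shapley v i = (Fintype.card ι : ℝ)⁻¹ * ∑ m ∈ range (Fintype.card ι),
      ((Fintype.card ι - 1).choose m : ℝ)⁻¹ *
        ∑ S ∈ powersetCard m (univ.erase i), (v (insert i S) - v S) := by
  rw [shapley, ← Ico_add_one_right_eq_Icc, sum_Ico_eq_sum_range, Nat.add_sub_cancel]
  simp only [Nat.add_sub_cancel_left, powersetCard_eq_filter]

noncomputable def shapleyLinearMap (i : ι) : (Finset ι → ℝ) →ₗ[ℝ] ℝ where
  toFun v := shapley v i
  map_add' v w := by
    simp only [shapley, Pi.add_apply, add_sub_add_comm, sum_add_distrib, mul_add]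
  map_smul' c v := by
    simp only [shapley, Pi.smul_apply, smul_eq_mul, ← mul_sub, ← mul_sum, RingHom.id_apply,
      mul_left_comm _ c]

theorem shapleyLinearMap_apply (v : Finset ι → ℝ) (i : ι) :
    shapleyLinearMap i v = shapley v i := rfl

theorem shapley_eq_zero_of_forall_insert_eq {v : Finset ι → ℝ} {i : ι}
    (h : ∀ S, v (insert i S) = v S) : shapley v i = 0 := by
  simp [shapley, h]

end Shapley

section Games

variable {ι : Type*} [DecidableEq ι]

def hittingGame (R S : Finset ι) : ℝ :=
  if Disjoint S R then 0 else 1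

theorem hittingGame_sub_hittingGame_erase (T S : Finset ι) (j : ι) :
    hittingGame T S - hittingGame (T.erase j) S = if S ∩ T = {j} then 1 else 0 := by
  simp only [hittingGame, disjoint_iff_inter_eq_empty, inter_erase, erase_eq_empty_iff]
  split_ifs <;> simp_all

theorem commander_eq_sum_sub_hittingGame (T : Finset ι) :
    commander T = ∑ j ∈ T, (hittingGame T - hittingGame (T.erase j)) := by
  funext S
  simp only [Finset.sum_apply, Pi.sub_apply]
  rw [sum_congr rfl fun j _ => hittingGame_sub_hittingGame_erase T S j, commander]
  split_ifs with h
  · obtain ⟨a, ha⟩ := card_eq_one.1 h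
    have haT : a ∈ T := (mem_inter.1 (ha ▸ mem_singleton_self a)).2
    simp only [ha, singleton_inj, sum_ite_eq, if_pos haT]
  · refine (sum_eq_zero fun j _ => if_neg fun hj => h ?_).symm
    rw [hj, card_singleton]

theorem card_filter_disjoint_powersetCard_erase [Fintype ι] {R : Finset ι} {i : ι} (hi : i ∈ R)
    (m : ℕ) :
    #{S ∈ powersetCard m (univ.erase i) | Disjoint S R} = (Fintype.card ι - #R).choose m := by
  rw [← card_compl, ← card_powersetCard]
  congr 1
  ext S
  simp only [mem_filter, mem_powersetCard, subset_erase, subset_univ, true_and,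
    subset_compl_iff_disjoint_right]
  exact ⟨fun ⟨⟨_, hm⟩, hd⟩ => ⟨hd, hm⟩,
    fun ⟨hd, hm⟩ => ⟨⟨fun hiS => disjoint_left.1 hd hiS hi, hm⟩, hd⟩⟩

theorem shapley_hittingGame [Fintype ι] (R : Finset ι) (i : ι) :
    shapley (hittingGame R) i = if i ∈ R then (#R : ℝ)⁻¹ else 0 := by
  split_ifs with hi
  · have marginal : ∀ S, hittingGame R (insert i S) - hittingGame R S =
        if Disjoint S R then 1 else 0 := by
      intro S
      simp only [hittingGame, disjoint_insert_left, hi, not_true_eq_false, false_and, if_false]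
      split_ifs <;> norm_num
    have hR := card_pos.2 ⟨i, hi⟩
    have hRn := card_le_univ R
    obtain ⟨a, b, hn, hr⟩ : ∃ a b, Fintype.card ι = a + b + 1 ∧ #R = b + 1 :=
      ⟨Fintype.card ι - #R, #R - 1, by omega, by omega⟩
    simp only [shapley_eq_sum_range, marginal, sum_boole,
      card_filter_disjoint_powersetCard_erase hi, hn, hr, Nat.add_sub_cancel,
      show a + b + 1 - (b + 1) = a by omega, inv_mul_eq_div, Nat.sum_range_choose_div_choose]
    push_cast
    field_simp
  · refine shapley_eq_zero_of_forall_insert_eq fun S => ?_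
    simp [hittingGame, disjoint_insert_left, hi]

end Games

theorem stmt_2_general {ι : Type*} [Fintype ι] [DecidableEq ι]
    (T : Finset ι) (hT : 2 ≤ T.card) :
    ∀ i : ι, shapley (commander T) i = 0 := by
  intro i
  rw [← shapleyLinearMap_apply, commander_eq_sum_sub_hittingGame, map_sum]
  simp only [map_sub, shapleyLinearMap_apply, shapley_hittingGame]
  by_cases hi : i ∈ T
  swap
  · simp [hi]
  have ht : (2 : ℝ) ≤ #T := by exact_mod_cast hT
  have erase_term : ∀ j ∈ T, (if i ∈ T.erase j then (#(T.erase j) : ℝ)⁻¹ else 0) =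
      if j ≠ i then ((#T : ℝ) - 1)⁻¹ else 0 := by
    intro j hj
    simp [mem_erase, hi, cast_card_erase_of_mem hj, ne_comm]
  rw [sum_sub_distrib, if_pos hi, sum_congr rfl erase_term, ← sum_filter, filter_ne',
    sum_const, sum_const, nsmul_eq_mul, nsmul_eq_mul, cast_card_erase_of_mem hi,
    mul_inv_cancel₀ (by linarith), mul_inv_cancel₀ (by linarith), sub_self]

theorem stmt_2 {ι : Type*} [Fintype ι] [DecidableEq ι]
    (hn : 1 ≤ Fintype.card ι) (T : Finset ι) (hT : 2 ≤ T.card) :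
    ∀ i : ι, shapley (commander T) i = 0 :=
  stmt_2_general T hT
end

section
/- Let N be a finite set with |N| = n ≥ 1 and let v be any utility function on N with Shapley vector s = φ(v). Then there exist real coefficients α_T, indexed by the subsets T ⊆ N with |T| ≥ 2, such that for every S ⊆ N: v(S) = Σ_{i∈S} s_i + Σ_{T ⊆ N, |T| ≥ 2} α_T · ū_T(S). -/
open Finset

/-!
Expand `v` in unanimity games `u_U(S) = [U ⊆ S]` with its Harsanyi dividends `d_U` (the Möbius
inverse of `v`). Since `φ_i(u_U) = 1/|U|` for `i ∈ U` and `0` otherwise, linearity gives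
`φ_i(v) = Σ_{U ∋ i} d_U / |U|`. Each unanimity game is itself a signed sum of commander games,
`|U| · u_U = Σ_{T ⊆ U} (-1)^(|T|+1) ū_T`, so `v = Σ_T α_T ū_T` with
`α_T = (-1)^(|T|+1) Σ_{U ⊇ T} d_U / |U|`; for `T = {i}` this coefficient is exactly `φ_i(v)`.
-/

-- `C(m, j) / C(m + r, r + j) = C(j + r, r) / C(m + r, r)`, then the hockey-stick identity.
theorem sum_choose_div_choose (m r : ℕ) :
    ∑ j ∈ range (m + 1), (m.choose j : ℝ) / (m + r).choose (r + j) =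
      (m + r + 1) / (r + 1) := by
  have hpos : ∀ k ≤ m + r, (0 : ℝ) < (m + r).choose k := fun k hk => by
    exact_mod_cast Nat.choose_pos hk
  have hterm : ∀ j ∈ range (m + 1),
      (m.choose j : ℝ) / (m + r).choose (r + j) = (j + r).choose r / (m + r).choose r := by
    intro j hj
    have hjm : j ≤ m := Nat.lt_succ_iff.mp (mem_range.mp hj)
    have h := Nat.choose_mul (n := m + r) (k := r + j) (s := r) (by omega)
    rw [Nat.add_sub_cancel, Nat.add_sub_cancel_left, add_comm r j] at h
    rw [div_eq_div_iff (hpos _ (by omega)).ne' (hpos _ (by omega)).ne', add_comm r j]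
    exact_mod_cast (by linarith [h] :
      m.choose j * (m + r).choose r = (j + r).choose r * (m + r).choose (j + r))
  rw [sum_congr rfl hterm, ← sum_div, ← Nat.cast_sum, Nat.sum_range_add_choose,
    div_eq_div_iff (hpos r (by omega)).ne' (by positivity)]
  exact_mod_cast (Nat.add_one_mul_choose_eq (m + r) r).symm

theorem sum_Icc_apply_card {α M : Type*} [DecidableEq α] [AddCommMonoid M] {B A : Finset α}
    (h : B ⊆ A) (f : ℕ → M) :
    ∑ S ∈ Icc B A, f #S = ∑ j ∈ range (#A - #B + 1), (#A - #B).choose j • f (#B + j) := by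
  have hdisj : ∀ W ∈ (A \ B).powerset, Disjoint B W := fun W hW =>
    disjoint_of_subset_right (mem_powerset.1 hW) disjoint_sdiff
  rw [Icc_eq_image_powerset h, sum_image fun W hW W' hW' e => by
    rw [← union_sdiff_cancel_left (hdisj W hW), e, union_sdiff_cancel_left (hdisj W' hW')]]
  rw [sum_congr rfl fun W hW => by rw [card_union_of_disjoint (hdisj W hW)],
    sum_powerset_apply_card (fun k => f (#B + k)), card_sdiff_of_subset h]

section

variable {ι : Type*} [DecidableEq ι]

def unanimity (U S : Finset ι) : ℝ := if U ⊆ S then 1 else 0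

noncomputable def harsanyiDividend (v : Finset ι → ℝ) (S : Finset ι) : ℝ :=
  v S - ∑ U ∈ S.ssubsets.attach, harsanyiDividend v U
termination_by #S
decreasing_by exact card_lt_card (mem_ssubsets.1 U.2)

theorem sum_harsanyiDividend (v : Finset ι → ℝ) (S : Finset ι) :
    ∑ U ∈ S.powerset, harsanyiDividend v U = v S := by
  rw [← insert_erase (mem_powerset_self S), sum_insert (notMem_erase _ _), harsanyiDividend,
    sum_attach S.ssubsets (harsanyiDividend v), ssubsets, sub_add_cancel]

theorem harsanyiDividend_empty (v : Finset ι → ℝ) : harsanyiDividend v ∅ = v ∅ := by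
  simpa using sum_harsanyiDividend v ∅

theorem sum_powerset_disjoint_neg_one_pow (U S : Finset ι) :
    ∑ T ∈ U.powerset with Disjoint S T, (-1 : ℝ) ^ #T = if U ⊆ S then 1 else 0 := by
  have h : U.powerset.filter (Disjoint S ·) = (U \ S).powerset := by
    ext T; simp [subset_sdiff, disjoint_comm]
  rw [h]
  exact_mod_cast (sum_powerset_neg_one_pow_card (x := U \ S)).trans (by simp)

theorem sum_powerset_neg_one_pow_mul_commander (U S : Finset ι) :
    ∑ T ∈ U.powerset, (-1 : ℝ) ^ (#T + 1) * commander T S = #U * unanimity U S := by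
  induction U using Finset.induction_on with
  | empty => simp [commander, unanimity]
  | insert a U ha ih =>
    have haT : ∀ T ∈ U.powerset, a ∉ T := fun T hT h => ha (mem_powerset.1 hT h)
    rw [sum_powerset_insert ha]
    by_cases haS : a ∈ S
    · have h : ∀ T ∈ U.powerset, (-1 : ℝ) ^ (#(insert a T) + 1) * commander (insert a T) S =
          if Disjoint S T then (-1) ^ #T else 0 := by
        intro T hT
        rw [card_insert_of_notMem (haT T hT), commander, inter_insert_of_mem haS,
          card_insert_of_notMem (fun h => haT T hT (mem_inter.1 h).2)]
        simp [disjoint_iff_inter_eq_empty, pow_succ]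
      rw [sum_congr rfl h, ← sum_filter, sum_powerset_disjoint_neg_one_pow, ih]
      simp only [unanimity, mul_ite, mul_one, mul_zero, card_insert_of_notMem ha, Nat.cast_add,
        Nat.cast_one, insert_subset_iff, haS, true_and]
      split_ifs <;> ring
    · have h : ∀ T ∈ U.powerset, (-1 : ℝ) ^ (#(insert a T) + 1) * commander (insert a T) S =
          -((-1) ^ (#T + 1) * commander T S) := by
        intro T hT
        rw [card_insert_of_notMem (haT T hT), commander, commander, inter_insert_of_notMem haS]
        ring
      rw [sum_congr rfl h, sum_neg_distrib, add_neg_cancel]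
      simp [unanimity, insert_subset_iff, haS]

variable [Fintype ι]

theorem shapley_sum_mul {κ : Type*} (s : Finset κ) (c : κ → ℝ) (g : κ → Finset ι → ℝ)
    (i : ι) :
    shapley (fun S => ∑ k ∈ s, c k * g k S) i = ∑ k ∈ s, c k * shapley (g k) i := by
  simp only [shapley, ← sum_sub_distrib, ← mul_sub, mul_sum]
  rw [sum_comm]
  refine sum_congr rfl fun k _ => ?_
  rw [sum_comm]
  refine sum_congr rfl fun j _ => sum_congr rfl fun S _ => ?_
  ring

noncomputable def shapleyWeight (n s : ℕ) : ℝ := (n : ℝ)⁻¹ * ((n - 1).choose s : ℝ)⁻¹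

theorem shapley_eq_sum_powerset (v : Finset ι → ℝ) (i : ι) :
    shapley v i = ∑ S ∈ (univ.erase i).powerset,
      shapleyWeight (Fintype.card ι) #S * (v (insert i S) - v S) := by
  have hn : 1 ≤ Fintype.card ι := Fintype.card_pos_iff.mpr ⟨i⟩
  rw [shapley, sum_powerset, card_erase_of_mem (mem_univ i), card_univ, mul_sum,
    Nat.sub_add_cancel hn, ← Ico_add_one_right_eq_Icc, sum_Ico_eq_sum_range]
  simp only [add_tsub_cancel_right, add_tsub_cancel_left, powersetCard_eq_filter, mul_sum,
    shapleyWeight, mul_assoc]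
  exact sum_congr rfl fun k _ => sum_congr rfl fun S hS => by rw [(mem_filter.1 hS).2]

theorem shapley_unanimity (U : Finset ι) (i : ι) :
    shapley (unanimity U) i = if i ∈ U then (#U : ℝ)⁻¹ else 0 := by
  split_ifs with hi
  · have hmarg : ∀ S ∈ (univ.erase i).powerset,
        unanimity U (insert i S) - unanimity U S = if U.erase i ⊆ S then 1 else 0 := by
      intro S hS
      have hiS : i ∉ S := fun h => (mem_erase.1 (mem_powerset.1 hS h)).1 rfl
      simp [unanimity, subset_insert_iff, show ¬U ⊆ S from fun h => hiS (h hi)]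
    have hIcc :
        (univ.erase i).powerset.filter (U.erase i ⊆ ·) = Icc (U.erase i) (univ.erase i) := by
      ext S; simp [and_comm]
    obtain ⟨r, hr⟩ : ∃ r, #U = r + 1 := Nat.exists_eq_add_one.2 (card_pos.2 ⟨i, hi⟩)
    obtain ⟨m, hm⟩ : ∃ m, Fintype.card ι = m + r + 1 := by
      have := card_le_univ U
      exact ⟨Fintype.card ι - (r + 1), by omega⟩
    rw [shapley_eq_sum_powerset,
      sum_congr rfl fun S hS => by rw [hmarg S hS, mul_ite, mul_one, mul_zero], ← sum_filter,
      hIcc, sum_Icc_apply_card (erase_subset_erase i (subset_univ U))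
        (shapleyWeight (Fintype.card ι))]
    simp only [card_erase_of_mem hi, card_erase_of_mem (mem_univ i), card_univ, hr, hm,
      nsmul_eq_mul, shapleyWeight, Nat.add_sub_cancel, Nat.cast_add, Nat.cast_one]
    calc ∑ j ∈ range (m + 1),
          (m.choose j : ℝ) * ((m + r + 1 : ℝ)⁻¹ * ((m + r).choose (r + j) : ℝ)⁻¹)
        _ = (m + r + 1 : ℝ)⁻¹ *
            ∑ j ∈ range (m + 1), (m.choose j : ℝ) / (m + r).choose (r + j) := by
          rw [mul_sum]; exact sum_congr rfl fun j _ => by ring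
        _ = (r + 1 : ℝ)⁻¹ := by rw [sum_choose_div_choose]; field_simp
  · simp [shapley, unanimity, subset_insert_iff_of_notMem hi]

theorem sum_harsanyiDividend_mul_unanimity (v : Finset ι → ℝ) (S : Finset ι) :
    ∑ U, harsanyiDividend v U * unanimity U S = v S := by
  simp only [unanimity, mul_ite, mul_one, mul_zero]
  rw [← sum_filter, ← sum_harsanyiDividend v S]
  congr 1; ext U; simp

theorem shapley_eq_sum_harsanyiDividend (v : Finset ι → ℝ) (i : ι) :
    shapley v i = ∑ U with i ∈ U, harsanyiDividend v U / #U := by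
  conv_lhs => rw [← funext (sum_harsanyiDividend_mul_unanimity v)]
  simp [shapley_sum_mul, shapley_unanimity, sum_filter, div_eq_mul_inv]

noncomputable def commanderCoeff (v : Finset ι → ℝ) (T : Finset ι) : ℝ :=
  (-1) ^ (#T + 1) * ∑ U with T ⊆ U, harsanyiDividend v U / #U

theorem commanderCoeff_singleton (v : Finset ι → ℝ) (i : ι) :
    commanderCoeff v {i} = shapley v i := by
  simp [commanderCoeff, shapley_eq_sum_harsanyiDividend]

theorem sum_commanderCoeff_mul_commander {v : Finset ι → ℝ} (hv : v ∅ = 0) (S : Finset ι) :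
    ∑ T, commanderCoeff v T * commander T S = v S := by
  have hterm : ∀ U, harsanyiDividend v U * unanimity U S =
      ∑ T ∈ U.powerset, harsanyiDividend v U / #U * ((-1) ^ (#T + 1) * commander T S) := by
    intro U
    rw [← mul_sum, sum_powerset_neg_one_pow_mul_commander]
    rcases U.eq_empty_or_nonempty with rfl | hU
    -- `#∅ = 0` makes the division junk, but the term vanishes since `d ∅ = v ∅ = 0`.
    · simp [harsanyiDividend_empty, hv]
    · field_simp [(card_pos.2 hU).ne']
  calc ∑ T, commanderCoeff v T * commander T S
      = ∑ T, ∑ U with T ⊆ U,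
          harsanyiDividend v U / #U * ((-1) ^ (#T + 1) * commander T S) := by
        simp only [commanderCoeff, mul_sum, sum_mul]
        exact sum_congr rfl fun T _ => sum_congr rfl fun U _ => by ring
    _ = ∑ U, ∑ T ∈ U.powerset,
          harsanyiDividend v U / #U * ((-1) ^ (#T + 1) * commander T S) :=
        sum_comm' fun T U => by simp
    _ = v S := by rw [← sum_harsanyiDividend_mul_unanimity v S, sum_congr rfl fun U _ => hterm U]

theorem sum_mul_commander (α : Finset ι → ℝ) (S : Finset ι) :
    ∑ T, α T * commander T S =
      ∑ i ∈ S, α {i} + ∑ T with 2 ≤ #T, α T * commander T S := by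
  rw [← sum_filter_not_add_sum_filter univ (fun T => 2 ≤ #T)]
  congr 1
  have hsub : powersetCard 1 univ ⊆ univ.filter (fun T : Finset ι => ¬2 ≤ #T) := by
    intro T hT
    simp [(mem_powersetCard.1 hT).2]
  have hzero : ∀ T ∈ univ.filter (fun T : Finset ι => ¬2 ≤ #T),
      T ∉ powersetCard 1 univ → α T * commander T S = 0 := by
    intro T hT hT1
    have : #T = 0 := by
      simp only [mem_filter, mem_univ, true_and, mem_powersetCard, subset_univ] at hT hT1
      omega
    simp [card_eq_zero.1 this, commander]
  rw [← sum_subset hsub hzero, powersetCard_one, sum_map]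
  simp [commander, inter_singleton, apply_ite, sum_ite_mem]

end

theorem stmt_4_general {ι : Type*} [Fintype ι] [DecidableEq ι]
    (v : Finset ι → ℝ) (hv : v ∅ = 0) :
    ∃ α : Finset ι → ℝ, ∀ S : Finset ι,
      v S = (∑ i ∈ S, shapley v i) +
        ∑ T ∈ Finset.univ.filter (fun T : Finset ι => 2 ≤ T.card),
          α T * commander T S := by
  refine ⟨commanderCoeff v, fun S => ?_⟩
  rw [← sum_commanderCoeff_mul_commander hv S, sum_mul_commander]
  simp only [commanderCoeff_singleton]

/-- Every utility function `v` with Shapley vector `s = φ(v)` decomposes as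
`v(S) = Σ_{i∈S} s_i + Σ_{|T| ≥ 2} α_T ū_T(S)` for suitable coefficients `α_T`. -/
theorem stmt_4 {ι : Type*} [Fintype ι] [DecidableEq ι]
    (hn : 1 ≤ Fintype.card ι) (v : Finset ι → ℝ) (hv : v ∅ = 0) :
    ∃ α : Finset ι → ℝ, ∀ S : Finset ι,
      v S = (∑ i ∈ S, shapley v i) +
        ∑ T ∈ Finset.univ.filter (fun T : Finset ι => 2 ≤ T.card),
          α T * commander T S :=
  stmt_4_general v hv
end

section
/- Let N be a finite set with |N| = n ≥ 2 and let v be a monotonically transformed modular utility function on N, i.e., v(S) = f(w₀ + Σ_{i∈S} w_i) for a monotonically non-decreasing f : ℝ → ℝ, a constant w₀ ∈ ℝ, and weights (w_i)_{i∈N}. Then for any i, j ∈ N with w_i ≥ w_j, one has φ_i(v) ≥ φ_j(v). -/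
/-!
Transposing `i` and `j` turns `φ_j(v)` into `φ_i(v ∘ swap)`, so it suffices to compare the
marginal contributions of `i` to `v ∘ swap` and to `v` coalition by coalition. Each comparison
reduces to `v(T ∪ {j}) ≤ v(T ∪ {i})` for some `T` avoiding `i` and `j`, which for a monotonically
transformed modular `v` is the monotonicity of `f` applied to `w j ≤ w i`.
-/

open Finset

section

variable {ι : Type*} [DecidableEq ι]

theorem Finset.map_swap_of_notMem {i j : ι} {S : Finset ι} (hi : i ∉ S) (hj : j ∉ S) :
    S.map (Equiv.swap i j).toEmbedding = S := by
  ext x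
  rw [mem_map_equiv, Equiv.symm_swap]
  rcases eq_or_ne x i with rfl | hxi
  · simp [hi, hj]
  rcases eq_or_ne x j with rfl | hxj
  · simp [hi, hj]
  rw [Equiv.swap_apply_of_ne_of_ne hxi hxj]

variable [Fintype ι]

theorem Finset.mem_filter_powerset_univ_erase {i : ι} {m : ℕ} {S : Finset ι} :
    S ∈ (univ.erase i).powerset.filter (fun S => S.card = m) ↔ i ∉ S ∧ S.card = m := by
  simp only [mem_filter, mem_powerset, subset_erase, subset_univ, true_and]

theorem shapley_map_equiv (v : Finset ι → ℝ) (σ : ι ≃ ι) (i : ι) :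
    shapley (fun S => v (S.map σ.toEmbedding)) i = shapley v (σ i) := by
  unfold shapley
  congr 1
  refine sum_congr rfl fun k _ => congr_arg _ ?_
  refine sum_equiv σ.finsetCongr (fun S => ?_) (fun S _ => ?_)
  · rw [mem_filter_powerset_univ_erase, mem_filter_powerset_univ_erase]
    simp
  · simp [map_insert]

theorem shapley_mono {u v : Finset ι → ℝ} {i : ι}
    (h : ∀ S, i ∉ S → u (insert i S) - u S ≤ v (insert i S) - v S) :
    shapley u i ≤ shapley v i := by
  unfold shapley
  refine mul_le_mul_of_nonneg_left (sum_le_sum fun k _ => mul_le_mul_of_nonneg_left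
    (sum_le_sum fun S hS => ?_) (by positivity)) (by positivity)
  exact h S (mem_filter_powerset_univ_erase.mp hS).1

theorem shapley_le_shapley_of_insert_le_insert {v : Finset ι → ℝ} {i j : ι}
    (h : ∀ S, i ∉ S → j ∉ S → v (insert j S) ≤ v (insert i S)) :
    shapley v j ≤ shapley v i := by
  rw [← Equiv.swap_apply_left i j, ← shapley_map_equiv]
  refine shapley_mono fun S hiS => ?_
  by_cases hjS : j ∈ S
  · obtain ⟨T, rfl, hjT⟩ : ∃ T, S = insert j T ∧ j ∉ T :=
      ⟨S.erase j, (insert_erase hjS).symm, notMem_erase j S⟩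
    have hiT : i ∉ T := fun hiT => hiS (mem_insert_of_mem hiT)
    simp only [map_insert, Equiv.coe_toEmbedding, Equiv.swap_apply_left,
      Equiv.swap_apply_right, map_swap_of_notMem hiT hjT]
    rw [insert_comm]
    linarith [h T hiT hjT]
  · simp only [map_insert, Equiv.coe_toEmbedding, Equiv.swap_apply_left,
      map_swap_of_notMem hiS hjS]
    linarith [h S hiS hjS]

end

theorem stmt_8_general {ι : Type*} [Fintype ι] [DecidableEq ι]
    (f : ℝ → ℝ) (hf : Monotone f) (w₀ : ℝ) (w : ι → ℝ)
    (v : Finset ι → ℝ)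
    (hv : ∀ S : Finset ι, v S = f (w₀ + ∑ i ∈ S, w i))
    (i j : ι) (hw : w j ≤ w i) :
    shapley v j ≤ shapley v i := by
  refine shapley_le_shapley_of_insert_le_insert fun S hiS hjS => ?_
  rw [hv, hv, sum_insert hiS, sum_insert hjS]
  exact hf (by linarith)

/-- For a monotonically transformed modular utility function
`v(S) = f(w₀ + Σ_{i∈S} w_i)` with `f` monotonically non-decreasing,
if `w_i ≥ w_j` then `φ_i(v) ≥ φ_j(v)`. -/
theorem stmt_8 {ι : Type*} [Fintype ι] [DecidableEq ι]
    (hn : 2 ≤ Fintype.card ι)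
    (f : ℝ → ℝ) (hf : Monotone f) (w₀ : ℝ) (w : ι → ℝ)
    (v : Finset ι → ℝ) (hv0 : v ∅ = 0)
    (hv : ∀ S : Finset ι, v S = f (w₀ + ∑ i ∈ S, w i))
    (i j : ι) (hw : w j ≤ w i) :
    shapley v j ≤ shapley v i :=
  stmt_8_general f hf w₀ w v hv i j hw
end
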